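/- Let B, B̂ ∈ ℝ^{d×d} with ‖B − B̂‖₂ ≤ δ, and let X ∈ ℝ^{n×d} be a matrix with rows x_1, …, x_n. Define for each i the attention rows a_iᵀ = Softmax(x_iᵀ B Xᵀ / √d) and â_iᵀ = Softmax(x_iᵀ B̂ Xᵀ / √d). Then for every i, ‖a_i − â_i‖₂ ≤ δ ‖X‖_{∞,2}² / √d. -/

import Mathlib

/-! Softmax is `1`-Lipschitz from `ℓ^∞` to `ℓ²`: its derivative at `x` in direction `h` is
`p ⊙ (h - ⟨p, h⟩)` with `p = softmax x` a probability vector, whose squared `ℓ²` norm is at most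
the `p`-variance of `h`, hence at most `‖h‖²_∞`; the mean value inequality along a segment
does the rest. The two logit vectors differ in entry `j` by `x_iᵀ (B - B̂) x_j / √d`, which
Cauchy–Schwarz and the spectral norm bound by `δ ‖X‖²_{∞,2} / √d`. -/

open scoped BigOperators ENNReal

/-- Softmax map on `ℝⁿ`. -/
noncomputable def softmax {n : ℕ} (x : Fin n → ℝ) : Fin n → ℝ :=
  fun i => Real.exp (x i) / ∑ j, Real.exp (x j)

/-- Euclidean norm on `ℝⁿ`. -/
noncomputable def l2norm {n : ℕ} (x : Fin n → ℝ) : ℝ :=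
  Real.sqrt (∑ i, x i ^ 2)

/-- Supremum norm on `ℝⁿ`. -/
noncomputable def linftyNorm {n : ℕ} (x : Fin n → ℝ) : ℝ :=
  ⨆ i, |x i|

/-- Spectral norm (operator norm w.r.t. Euclidean norms) of a real matrix. -/
noncomputable def matrixSpectralNorm {m n : ℕ} (A : Matrix (Fin m) (Fin n) ℝ) : ℝ :=
  sSup { r | ∃ x : Fin n → ℝ, l2norm x ≤ 1 ∧ r = l2norm (A.mulVec x) }

/-- Smallest singular value of a square real matrix. -/
noncomputable def sigmaMin {d : ℕ} (W : Matrix (Fin d) (Fin d) ℝ) : ℝ :=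
  sInf { r | ∃ x : Fin d → ℝ, l2norm x = 1 ∧ r = l2norm (W.mulVec x) }

/-- `‖X‖_{∞,2}`: the maximum Euclidean norm of a row of `X`. -/
noncomputable def maxRowNorm {n d : ℕ} (X : Matrix (Fin n) (Fin d) ℝ) : ℝ :=
  ⨆ i, l2norm (X i)

open Matrix

section L2Norm

variable {n : ℕ}

lemma l2norm_eq_norm_toLp (x : Fin n → ℝ) : l2norm x = ‖WithLp.toLp 2 x‖ := by
  simp [l2norm, EuclideanSpace.norm_eq]

lemma l2norm_nonneg (x : Fin n → ℝ) : 0 ≤ l2norm x := Real.sqrt_nonneg _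

lemma l2norm_smul (a : ℝ) (x : Fin n → ℝ) : l2norm (a • x) = |a| * l2norm x := by
  simp [l2norm_eq_norm_toLp, norm_smul]

lemma abs_dotProduct_le_l2norm_mul (x y : Fin n → ℝ) :
    |x ⬝ᵥ y| ≤ l2norm x * l2norm y := by
  rw [← Real.sqrt_sq_eq_abs, l2norm, l2norm, ← Real.sqrt_mul (by positivity)]
  exact Real.sqrt_le_sqrt (Finset.sum_mul_sq_le_sq_mul_sq _ _ _)

end L2Norm

section SpectralNorm

variable {m n : ℕ} (A : Matrix (Fin m) (Fin n) ℝ)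

lemma bddAbove_l2norm_mulVec_unitBall :
    BddAbove { r | ∃ x : Fin n → ℝ, l2norm x ≤ 1 ∧ r = l2norm (A *ᵥ x) } := by
  let T := LinearMap.toContinuousLinearMap (toLpLin 2 2 A)
  refine ⟨‖T‖, ?_⟩
  rintro r ⟨x, hx, rfl⟩
  calc l2norm (A *ᵥ x) = ‖T (WithLp.toLp 2 x)‖ := by simp [T, l2norm_eq_norm_toLp]
    _ ≤ ‖T‖ * l2norm x := by rw [l2norm_eq_norm_toLp]; exact T.le_opNorm _
    _ ≤ ‖T‖ := mul_le_of_le_one_right (norm_nonneg _) hx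

lemma l2norm_mulVec_le_matrixSpectralNorm_of_l2norm_le_one {x : Fin n → ℝ} (hx : l2norm x ≤ 1) :
    l2norm (A *ᵥ x) ≤ matrixSpectralNorm A :=
  le_csSup (bddAbove_l2norm_mulVec_unitBall A) ⟨x, hx, rfl⟩

lemma matrixSpectralNorm_nonneg : 0 ≤ matrixSpectralNorm A :=
  (l2norm_nonneg _).trans (l2norm_mulVec_le_matrixSpectralNorm_of_l2norm_le_one A
    (x := 0) (by simp [l2norm]))

lemma l2norm_mulVec_le (x : Fin n → ℝ) :
    l2norm (A *ᵥ x) ≤ matrixSpectralNorm A * l2norm x := by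
  rcases (l2norm_nonneg x).eq_or_lt with h0 | hpos
  · obtain rfl : x = 0 := by simpa [l2norm_eq_norm_toLp] using h0.symm
    simp [l2norm]
  · have hunit : l2norm ((l2norm x)⁻¹ • x) ≤ 1 := by
      rw [l2norm_smul, abs_inv, abs_of_pos hpos, inv_mul_cancel₀ hpos.ne']
    have h := l2norm_mulVec_le_matrixSpectralNorm_of_l2norm_le_one A hunit
    rwa [mulVec_smul, l2norm_smul, abs_inv, abs_of_pos hpos, inv_mul_le_iff₀ hpos,
      mul_comm] at h

lemma abs_dotProduct_mulVec_le (x : Fin m → ℝ) (y : Fin n → ℝ) :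
    |x ⬝ᵥ A *ᵥ y| ≤ matrixSpectralNorm A * l2norm x * l2norm y :=
  calc |x ⬝ᵥ A *ᵥ y| ≤ l2norm x * l2norm (A *ᵥ y) := abs_dotProduct_le_l2norm_mul _ _
    _ ≤ l2norm x * (matrixSpectralNorm A * l2norm y) := by
      gcongr
      · exact l2norm_nonneg x
      · exact l2norm_mulVec_le A y
    _ = matrixSpectralNorm A * l2norm x * l2norm y := by ring

end SpectralNorm

lemma sum_sq_mul_sub_weightedMean_le {ι : Type*} [Fintype ι] {p Δ : ι → ℝ} {ε : ℝ}
    (hp0 : ∀ j, 0 ≤ p j) (hp1 : ∑ j, p j = 1) (hΔ : ∀ j, |Δ j| ≤ ε) :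
    ∑ j, (p j * (Δ j - ∑ k, p k * Δ k)) ^ 2 ≤ ε ^ 2 := by
  set m := ∑ k, p k * Δ k
  have hp_le_one (j : ι) : p j ≤ 1 :=
    hp1 ▸ Finset.single_le_sum (fun k _ => hp0 k) (Finset.mem_univ j)
  have hvariance : ∑ j, p j * (Δ j - m) ^ 2 = ∑ j, p j * Δ j ^ 2 - m ^ 2 := by
    have : ∑ j, p j * (Δ j - m) ^ 2
        = ∑ j, p j * Δ j ^ 2 - 2 * m * ∑ j, p j * Δ j + m ^ 2 * ∑ j, p j := by
      simp only [Finset.mul_sum, ← Finset.sum_sub_distrib, ← Finset.sum_add_distrib]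
      exact Finset.sum_congr rfl fun j _ => by ring
    rw [this, hp1]
    ring
  calc ∑ j, (p j * (Δ j - m)) ^ 2
      ≤ ∑ j, p j * (Δ j - m) ^ 2 := Finset.sum_le_sum fun j _ => by
        rw [mul_pow]
        exact mul_le_mul_of_nonneg_right (sq_le (hp0 j) (hp_le_one j)) (sq_nonneg _)
    _ = ∑ j, p j * Δ j ^ 2 - m ^ 2 := hvariance
    _ ≤ ∑ j, p j * Δ j ^ 2 := sub_le_self _ (sq_nonneg m)
    _ ≤ ∑ j, p j * ε ^ 2 := Finset.sum_le_sum fun j _ =>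
        mul_le_mul_of_nonneg_left (sq_le_sq.2 ((hΔ j).trans (le_abs_self ε))) (hp0 j)
    _ = ε ^ 2 := by rw [← Finset.sum_mul, hp1, one_mul]

section Softmax

variable {n : ℕ}

lemma softmax_nonneg (x : Fin n → ℝ) (j : Fin n) : 0 ≤ softmax x j := by
  unfold softmax
  positivity

lemma sum_softmax [NeZero n] (x : Fin n → ℝ) : ∑ j, softmax x j = 1 := by
  simp only [softmax, ← Finset.sum_div]
  exact div_self (Finset.sum_pos (fun j _ => Real.exp_pos _) Finset.univ_nonempty).ne'

lemma HasDerivAt.softmax [NeZero n] {γ : ℝ → Fin n → ℝ} {γ' : Fin n → ℝ} {t : ℝ}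
    (h : HasDerivAt γ γ' t) :
    HasDerivAt (fun s => softmax (γ s))
      (fun j => softmax (γ t) j * (γ' j - ∑ k, softmax (γ t) k * γ' k)) t := by
  rw [hasDerivAt_pi] at h ⊢
  intro j
  have hexp (k : Fin n) : HasDerivAt (fun s => Real.exp (γ s k)) (Real.exp (γ t k) * γ' k) t :=
    (h k).exp
  have hS : (∑ k, Real.exp (γ t k)) ≠ 0 :=
    (Finset.sum_pos (fun k _ => Real.exp_pos _) Finset.univ_nonempty).ne'
  refine ((hexp j).fun_div (HasDerivAt.fun_sum fun k _ => hexp k) hS).congr_deriv ?_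
  simp only [_root_.softmax, div_mul_eq_mul_div, ← Finset.sum_div]
  field_simp

theorem l2norm_softmax_sub_le (u v : Fin n → ℝ) :
    l2norm (softmax u - softmax v) ≤ linftyNorm (u - v) := by
  set ε := linftyNorm (u - v)
  have hε : 0 ≤ ε := Real.iSup_nonneg fun j => abs_nonneg _
  rcases n.eq_zero_or_pos with rfl | hn
  · simpa [l2norm] using hε
  have : NeZero n := ⟨hn.ne'⟩
  have hΔ (j : Fin n) : |(u - v) j| ≤ ε :=
    le_ciSup (f := fun j => |(u - v) j|) (Set.finite_range _).bddAbove j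
  let γ : ℝ → Fin n → ℝ := fun t => v + t • (u - v)
  have hγ (t : ℝ) : HasDerivAt γ (u - v) t := by
    simpa only [id, one_smul] using ((hasDerivAt_id t).smul_const (u - v)).const_add v
  let e := (PiLp.continuousLinearEquiv 2 ℝ fun _ : Fin n => ℝ).symm
  have hbound (t : ℝ) : ‖e (fun j => softmax (γ t) j *
      ((u - v) j - ∑ k, softmax (γ t) k * (u - v) k))‖ ≤ ε := by
    rw [← l2norm_eq_norm_toLp]
    exact (Real.sqrt_le_sqrt (sum_sq_mul_sub_weightedMean_le (softmax_nonneg _)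
      (sum_softmax _) hΔ)).trans_eq (Real.sqrt_sq hε)
  have := norm_image_sub_le_of_norm_deriv_le_segment_01'
    (fun t _ => (e.hasFDerivAt.comp_hasDerivAt t (hγ t).softmax).hasDerivWithinAt)
    (fun t _ => hbound t)
  simpa [γ, e, l2norm_eq_norm_toLp] using this

end Softmax

lemma l2norm_le_maxRowNorm {n d : ℕ} (X : Matrix (Fin n) (Fin d) ℝ) (j : Fin n) :
    l2norm (X j) ≤ maxRowNorm X :=
  le_ciSup (f := fun j => l2norm (X j)) (Set.finite_range _).bddAbove j

/-- if `‖B − B̂‖₂ ≤ δ`, then the attention rows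
`a_iᵀ = Softmax(x_iᵀ B Xᵀ/√d)` and `â_iᵀ = Softmax(x_iᵀ B̂ Xᵀ/√d)` satisfy
`‖a_i − â_i‖₂ ≤ δ ‖X‖_{∞,2}² / √d`. -/
theorem attention_rows_error_bound {n d : ℕ} (B Bhat : Matrix (Fin d) (Fin d) ℝ)
    (X : Matrix (Fin n) (Fin d) ℝ) (δ : ℝ)
    (hB : matrixSpectralNorm (B - Bhat) ≤ δ) (i : Fin n) :
    l2norm
      ((softmax fun j => dotProduct (X i) (B.mulVec (X j)) / Real.sqrt d) -
        (softmax fun j => dotProduct (X i) (Bhat.mulVec (X j)) / Real.sqrt d))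
      ≤ δ * maxRowNorm X ^ 2 / Real.sqrt d := by
  have hδ : 0 ≤ δ := (matrixSpectralNorm_nonneg _).trans hB
  refine (l2norm_softmax_sub_le _ _).trans <|
    Real.iSup_le (fun j => ?_) (div_nonneg (mul_nonneg hδ (sq_nonneg _)) (Real.sqrt_nonneg _))
  rw [Pi.sub_apply, ← sub_div, ← dotProduct_sub, ← sub_mulVec, abs_div,
    abs_of_nonneg (Real.sqrt_nonneg _)]
  have hXi := l2norm_le_maxRowNorm X i
  have hXj := l2norm_le_maxRowNorm X j
  gcongr
  calc |X i ⬝ᵥ (B - Bhat) *ᵥ X j|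
      ≤ matrixSpectralNorm (B - Bhat) * l2norm (X i) * l2norm (X j) :=
        abs_dotProduct_mulVec_le _ _ _
    _ ≤ δ * maxRowNorm X * maxRowNorm X :=
        mul_le_mul (mul_le_mul hB hXi (l2norm_nonneg _) hδ) hXj (l2norm_nonneg _)
          (mul_nonneg hδ ((l2norm_nonneg _).trans hXi))
    _ = δ * maxRowNorm X ^ 2 := by ring
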